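/- Let B be an integral domain and let A = [A^{ij}] ⊆ M_d(B) be a tiled matrix ring. Fix indices i, j, k ∈ {1,…,d} and suppose that A^{ij} ≠ 0, A^{ji} ≠ 0, and A^{ii}·1_d = Z(A). Suppose moreover that there exists a nonzero p ∈ e_iAe_j such that for every Z(A)-module homomorphism f : e_iAe_j → e_iAe_k there is some r ∈ e_jAe_k satisfying f(p) = pr. Then the map e_jAe_k → Hom_{Z(A)}(e_iAe_j, e_iAe_k) sending r to the homomorphism q ↦ qr is an isomorphism of Z(A)-modules. -/

import Mathlib

open Matrix

/-- The corner space `e_a A e_b` of a subring `A` of a matrix ring, where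
`e_a = stdBasisMatrix a a 1` is the idempotent at index `a`. -/
def cornerSet {B : Type*} [CommRing B] {d : ℕ}
    (A : Set (Matrix (Fin d) (Fin d) B)) (a b : Fin d) :
    Set (Matrix (Fin d) (Fin d) B) :=
  {M | ∃ N ∈ A, M = Matrix.single a a 1 * N * Matrix.single b b 1}

/-- `z` is an element of the center `Z(A)`. -/
def IsCenterElt {B : Type*} [CommRing B] {d : ℕ}
    (A : Set (Matrix (Fin d) (Fin d) B)) (z : Matrix (Fin d) (Fin d) B) : Prop :=
  z ∈ A ∧ ∀ a ∈ A, z * a = a * z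

/-- `f` represents a `Z(A)`-module homomorphism `e_i A e_j → e_i A e_k`:
it maps the corner `e_i A e_j` into the corner `e_i A e_k`, is additive, and is
`Z(A)`-linear (the `Z(A)`-action being multiplication in the matrix ring). -/
def IsCornerZHom' {B : Type*} [CommRing B] {d : ℕ}
    (A : Set (Matrix (Fin d) (Fin d) B)) (i j k : Fin d)
    (f : Matrix (Fin d) (Fin d) B → Matrix (Fin d) (Fin d) B) : Prop :=
  (∀ M ∈ cornerSet A i j, f M ∈ cornerSet A i k) ∧
  (∀ M ∈ cornerSet A i j, ∀ N ∈ cornerSet A i j, f (M + N) = f M + f N) ∧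
  (∀ z, IsCenterElt A z → ∀ M ∈ cornerSet A i j, f (z * M) = z * f M)

section TiledMatrixRing

variable {B : Type*} [CommRing B] {d : ℕ} {T : Fin d → Fin d → AddSubgroup B}

theorem single_mem_of_mem_tile {A : Set (Matrix (Fin d) (Fin d) B)}
    (hA : ∀ M, M ∈ A ↔ ∀ a b, M a b ∈ T a b) {a b : Fin d} {c : B} (hc : c ∈ T a b) :
    single a b c ∈ A := by
  refine (hA _).2 fun s t => ?_
  by_cases hst : a = s ∧ b = t
  · obtain ⟨rfl, rfl⟩ := hst
    rwa [single_apply_same]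
  · rw [single_apply_of_ne (h := hst)]
    exact zero_mem _

theorem mem_cornerSet_iff_of_tiled {A : Set (Matrix (Fin d) (Fin d) B)}
    (hA : ∀ M, M ∈ A ↔ ∀ a b, M a b ∈ T a b) {a b : Fin d} {M : Matrix (Fin d) (Fin d) B} :
    M ∈ cornerSet A a b ↔ ∃ c ∈ T a b, M = single a b c := by
  constructor
  · rintro ⟨N, hN, rfl⟩
    exact ⟨N a b, (hA N).1 hN a b, by simp⟩
  · rintro ⟨c, hc, rfl⟩
    exact ⟨single a b c, single_mem_of_mem_tile hA hc, by simp⟩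

theorem mul_mem_tile {A : Subring (Matrix (Fin d) (Fin d) B)}
    (hA : ∀ M, M ∈ A ↔ ∀ a b, M a b ∈ T a b) {a b c : Fin d} {x y : B}
    (hx : x ∈ T a b) (hy : y ∈ T b c) : x * y ∈ T a c := by
  have hxy := (hA _).1 (A.mul_mem (single_mem_of_mem_tile hA hx)
    (single_mem_of_mem_tile hA hy)) a c
  rwa [single_mul_single_same, single_apply_same] at hxy

theorem mul_mem_cornerSet_of_tiled {A : Subring (Matrix (Fin d) (Fin d) B)}
    (hA : ∀ M, M ∈ A ↔ ∀ a b, M a b ∈ T a b) {a b c : Fin d}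
    {M N : Matrix (Fin d) (Fin d) B} (hM : M ∈ cornerSet (A : Set _) a b)
    (hN : N ∈ cornerSet (A : Set _) b c) : M * N ∈ cornerSet (A : Set _) a c := by
  obtain ⟨x, hx, rfl⟩ := (mem_cornerSet_iff_of_tiled hA).1 hM
  obtain ⟨y, hy, rfl⟩ := (mem_cornerSet_iff_of_tiled hA).1 hN
  rw [single_mul_single_same]
  exact (mem_cornerSet_iff_of_tiled hA).2 ⟨x * y, mul_mem_tile hA hx hy, rfl⟩

theorem isCornerZHom'_mul_right {A : Subring (Matrix (Fin d) (Fin d) B)}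
    (hA : ∀ M, M ∈ A ↔ ∀ a b, M a b ∈ T a b) {i j k : Fin d}
    {r : Matrix (Fin d) (Fin d) B} (hr : r ∈ cornerSet (A : Set _) j k) :
    IsCornerZHom' (A : Set _) i j k (· * r) :=
  ⟨fun _ hM => mul_mem_cornerSet_of_tiled hA hM hr, fun M _ N _ => add_mul M N r,
    fun z _ M _ => mul_assoc z M r⟩

theorem eq_of_forall_cornerSet_mul_eq [NoZeroDivisors B] {A : Set (Matrix (Fin d) (Fin d) B)}
    (hA : ∀ M, M ∈ A ↔ ∀ a b, M a b ∈ T a b) {i j k : Fin d} (hij : T i j ≠ ⊥)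
    {r r' : Matrix (Fin d) (Fin d) B} (hr : r ∈ cornerSet A j k) (hr' : r' ∈ cornerSet A j k)
    (h : ∀ q ∈ cornerSet A i j, q * r = q * r') : r = r' := by
  obtain ⟨x, hx, hx0⟩ := (T i j).bot_or_exists_ne_zero.resolve_left hij
  obtain ⟨y, -, rfl⟩ := (mem_cornerSet_iff_of_tiled hA).1 hr
  obtain ⟨y', -, rfl⟩ := (mem_cornerSet_iff_of_tiled hA).1 hr'
  have hxy := congrFun₂ (h _ ((mem_cornerSet_iff_of_tiled hA).2 ⟨x, hx, rfl⟩)) i k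
  rw [single_mul_single_same, single_mul_single_same, single_apply_same,
    single_apply_same] at hxy
  rw [mul_left_cancel₀ hx0 hxy]

theorem IsCornerZHom'.map_smul {A : Set (Matrix (Fin d) (Fin d) B)} {i j k : Fin d}
    {f : Matrix (Fin d) (Fin d) B → Matrix (Fin d) (Fin d) B} (hf : IsCornerZHom' A i j k f)
    {s : B} (hs : IsCenterElt A (s • 1)) {M : Matrix (Fin d) (Fin d) B}
    (hM : M ∈ cornerSet A i j) : f (s • M) = s • f M := by
  simpa only [smul_one_mul] using hf.2.2 _ hs M hM

/-- Write `p = x₀ e_{ij}`, `q = x e_{ij}` and pick `0 ≠ u ∈ A^{ji}`. The scalars `(x u)·1` and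
`(x₀ u)·1` are central and `(x u) p = (x₀ u) q`, so `(x₀ u) f(q) = (x u) f(p) = (x₀ u) q r`,
and the nonzero scalar `x₀ u` cancels. -/
theorem IsCornerZHom'.apply_eq_mul_of_apply_eq [NoZeroDivisors B]
    {A : Subring (Matrix (Fin d) (Fin d) B)} (hA : ∀ M, M ∈ A ↔ ∀ a b, M a b ∈ T a b)
    {i j k : Fin d}
    (hcenter : ∀ s ∈ T i i, IsCenterElt (A : Set _) (s • (1 : Matrix (Fin d) (Fin d) B)))
    (hji : T j i ≠ ⊥) {f : Matrix (Fin d) (Fin d) B → Matrix (Fin d) (Fin d) B}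
    (hf : IsCornerZHom' (A : Set _) i j k f) {p r : Matrix (Fin d) (Fin d) B}
    (hp : p ∈ cornerSet (A : Set _) i j) (hp0 : p ≠ 0) (hfp : f p = p * r)
    {q : Matrix (Fin d) (Fin d) B} (hq : q ∈ cornerSet (A : Set _) i j) : f q = q * r := by
  obtain ⟨u, hu, hu0⟩ := (T j i).bot_or_exists_ne_zero.resolve_left hji
  obtain ⟨x₀, hx₀, rfl⟩ := (mem_cornerSet_iff_of_tiled hA).1 hp
  obtain ⟨x, hx, rfl⟩ := (mem_cornerSet_iff_of_tiled hA).1 hq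
  have hx₀0 : x₀ ≠ 0 := by
    rintro rfl
    exact hp0 (single_zero i j)
  have hswap : (x * u) • single i j x₀ = (x₀ * u) • single i j x := by
    rw [smul_single, smul_single, smul_eq_mul, smul_eq_mul]
    ring_nf
  apply smul_right_injective _ (mul_ne_zero hx₀0 hu0)
  calc (x₀ * u) • f (single i j x)
      = f ((x₀ * u) • single i j x) :=
        (hf.map_smul (hcenter _ (mul_mem_tile hA hx₀ hu)) hq).symm
    _ = (x * u) • (single i j x₀ * r) := by
        rw [← hswap, hf.map_smul (hcenter _ (mul_mem_tile hA hx hu)) hp, hfp]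
    _ = (x₀ * u) • (single i j x * r) := by
        rw [← smul_mul_assoc, hswap, smul_mul_assoc]

end TiledMatrixRing

/-- Let `B` be an integral domain and `A = [A^{ij}] ⊆ M_d(B)` a tiled matrix
ring.  Suppose `A^{ij} ≠ 0`, `A^{ji} ≠ 0`, `A^{ii}·1_d = Z(A)`, and that there is a nonzero
`p ∈ e_i A e_j` such that every `Z(A)`-module homomorphism `f : e_i A e_j → e_i A e_k`
satisfies `f(p) = p r` for some `r ∈ e_j A e_k`.  Then the map
`e_j A e_k → Hom_{Z(A)}(e_i A e_j, e_i A e_k)`, `r ↦ (q ↦ q r)`, is an isomorphism of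
`Z(A)`-modules: it is well defined (right multiplication by each `r ∈ e_j A e_k` is a
`Z(A)`-module homomorphism of the corners), injective, and surjective. -/
theorem corner_hom_right_mult_iso {B : Type*} [CommRing B] [IsDomain B] {d : ℕ}
    (T : Fin d → Fin d → AddSubgroup B)
    (A : Subring (Matrix (Fin d) (Fin d) B))
    (hA : ∀ M, M ∈ A ↔ ∀ a b, M a b ∈ T a b)
    (i j k : Fin d)
    (hij : T i j ≠ ⊥) (hji : T j i ≠ ⊥)
    (hZ : ∀ z, IsCenterElt (A : Set (Matrix (Fin d) (Fin d) B)) z ↔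
      ∃ s ∈ T i i, z = s • (1 : Matrix (Fin d) (Fin d) B))
    (hp : ∃ p ∈ cornerSet (A : Set (Matrix (Fin d) (Fin d) B)) i j, p ≠ 0 ∧
      ∀ f, IsCornerZHom' (A : Set (Matrix (Fin d) (Fin d) B)) i j k f →
        ∃ r ∈ cornerSet (A : Set (Matrix (Fin d) (Fin d) B)) j k, f p = p * r) :
    (∀ r ∈ cornerSet (A : Set (Matrix (Fin d) (Fin d) B)) j k,
      IsCornerZHom' (A : Set (Matrix (Fin d) (Fin d) B)) i j k (fun q => q * r)) ∧
    (∀ r ∈ cornerSet (A : Set (Matrix (Fin d) (Fin d) B)) j k,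
      ∀ r' ∈ cornerSet (A : Set (Matrix (Fin d) (Fin d) B)) j k,
        (∀ q ∈ cornerSet (A : Set (Matrix (Fin d) (Fin d) B)) i j, q * r = q * r') →
          r = r') ∧
    (∀ f, IsCornerZHom' (A : Set (Matrix (Fin d) (Fin d) B)) i j k f →
      ∃ r ∈ cornerSet (A : Set (Matrix (Fin d) (Fin d) B)) j k,
        ∀ q ∈ cornerSet (A : Set (Matrix (Fin d) (Fin d) B)) i j, f q = q * r) := by
  refine ⟨fun r hr => isCornerZHom'_mul_right hA hr,
    fun r hr r' hr' h => eq_of_forall_cornerSet_mul_eq hA hij hr hr' h, fun f hf => ?_⟩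
  obtain ⟨p, hp, hp0, hrep⟩ := hp
  obtain ⟨r, hr, hfp⟩ := hrep f hf
  have hcenter : ∀ s ∈ T i i, IsCenterElt (A : Set _) (s • (1 : Matrix (Fin d) (Fin d) B)) :=
    fun s hs => (hZ _).2 ⟨s, hs, rfl⟩
  exact ⟨r, hr, fun q hq => hf.apply_eq_mul_of_apply_eq hA hcenter hji hp hp0 hfp hq⟩
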